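/- Let μ, ν ∈ Par_n and p ∈ Z_{≥0} with |μ| + |ν| + p even, and suppose (μ, ν, (p)) satisfies every extended Horn inequality. Set k = (|μ| + |ν| − p)/2. Then μ/(μ∧ν) and ν/(μ∧ν) are horizontal strips, and there exist at least |μ∧ν| − k columns i such that μ'_i = ν'_i > 0, where μ' denotes the conjugate (transpose) partition of μ. -/

import Mathlib

/-- `μ` is a partition with at most `n` parts: a weakly decreasing sequence
`μ 0 ≥ μ 1 ≥ ⋯` of naturals (the paper's part `μ_{i+1}` is `μ i`, i.e. we use
0-indexing) vanishing from index `n` on. -/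
def IsPartitionN (n : ℕ) (μ : ℕ → ℕ) : Prop :=
  Antitone μ ∧ ∀ i, n ≤ i → μ i = 0

/-- The cells `(row, column)` (both 0-indexed) of the skew shape `lam/mu`. -/
def skewCells (lam mu : ℕ → ℕ) : Set (ℕ × ℕ) :=
  {p | mu p.1 ≤ p.2 ∧ p.2 < lam p.1}

/-- `T` is a Littlewood–Richardson skew tableau of shape `lam/mu` and content
`nu`: the shape `mu` is contained in `lam`, rows weakly increase, columns
strictly increase, the (0-indexed) letter `t` occurs `nu t` times, and every
prefix of the reverse reading word (rows read right-to-left, top-to-bottom)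
contains at least as many letters `t` as letters `t+1`. -/
def IsLRTableau (lam mu nu : ℕ → ℕ) (T : ℕ × ℕ → ℕ) : Prop :=
  (∀ i, mu i ≤ lam i) ∧
  (∀ i j j', mu i ≤ j → j ≤ j' → j' < lam i → T (i, j) ≤ T (i, j')) ∧
  (∀ i j, (i, j) ∈ skewCells lam mu → (i + 1, j) ∈ skewCells lam mu →
    T (i, j) < T (i + 1, j)) ∧
  (∀ t, Set.ncard {p ∈ skewCells lam mu | T p = t} = nu t) ∧
  (∀ i j t,
    Set.ncard {p ∈ skewCells lam mu |
        T p = t + 1 ∧ (p.1 < i ∨ (p.1 = i ∧ j ≤ p.2))} ≤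
      Set.ncard {p ∈ skewCells lam mu |
        T p = t ∧ (p.1 < i ∨ (p.1 = i ∧ j ≤ p.2))})

/-- The Littlewood–Richardson coefficient `c^{lam}_{mu,nu}`: the number of
Littlewood–Richardson skew tableaux of shape `lam/mu` and content `nu`
(tableaux are normalized to vanish off the shape). -/
noncomputable def lrCoeff (lam mu nu : ℕ → ℕ) : ℕ :=
  Set.ncard {T : ℕ × ℕ → ℕ | IsLRTableau lam mu nu T ∧
    ∀ p ∉ skewCells lam mu, T p = 0}

/-- The Newell–Littlewood number
`N_{μ,ν,λ} = ∑_{α,β,γ} c^μ_{α,β} c^ν_{α,γ} c^λ_{β,γ}`, realized as the number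
of tuples `((α, β, γ), (T₁, T₂, T₃))` where `α, β, γ` are partitions and
`T₁, T₂, T₃` are Littlewood–Richardson tableaux witnessing the coefficients
`c^μ_{α,β}`, `c^ν_{α,γ}` and `c^λ_{β,γ}` respectively. -/
noncomputable def nlNumber (mu nu lam : ℕ → ℕ) : ℕ :=
  Set.ncard {x : ((ℕ → ℕ) × (ℕ → ℕ) × (ℕ → ℕ)) ×
      ((ℕ × ℕ → ℕ) × (ℕ × ℕ → ℕ) × (ℕ × ℕ → ℕ)) |
    Antitone x.1.1 ∧ Antitone x.1.2.1 ∧ Antitone x.1.2.2 ∧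
    (IsLRTableau mu x.1.1 x.1.2.1 x.2.1 ∧
      ∀ p ∉ skewCells mu x.1.1, x.2.1 p = 0) ∧
    (IsLRTableau nu x.1.1 x.1.2.2 x.2.2.1 ∧
      ∀ p ∉ skewCells nu x.1.1, x.2.2.1 p = 0) ∧
    (IsLRTableau lam x.1.2.1 x.1.2.2 x.2.2.2 ∧
      ∀ p ∉ skewCells lam x.1.2.1, x.2.2.2 p = 0)}

/-- For `I = {i₁ < ⋯ < i_d} ⊆ {0, 1, 2, …}` (the 0-indexed version of the
paper's subsets of positive integers), `tauPartition I` is `τ(I)`, i.e. the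
partition whose (0-indexed) part `t` is `i_{d-t} − (d−t−1) - 1`; for the
paper's 1-indexed sets this is `τ(I) = (i_d − d ≥ ⋯ ≥ i₂ − 2 ≥ i₁ − 1)`. -/
def tauPartition (I : Finset ℕ) : ℕ → ℕ := fun t =>
  if t < I.card then
    (I.sort (· ≤ ·)).getD (I.card - 1 - t) 0 - (I.card - 1 - t)
  else 0

/-- Conditions (I)–(III) defining the set `𝒢_n` of data for the extended Horn
inequalities: all six sets are subsets of `{0, …, n−1}` (the 0-indexed version
of `[n] = {1, …, n}`), `A ∩ A' = B ∩ B' = C ∩ C' = ∅`,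
`|A| = |B'| + |C'|`, `|B| = |A'| + |C'|`, `|C| = |A'| + |B'|`, and there exist
`A₁, A₂, B₁, B₂, C₁, C₂ ⊆ {0, …, n−1}` with `|A₁| = |A₂| = |A'|`,
`|B₁| = |B₂| = |B'|`, `|C₁| = |C₂| = |C'|` such that
`c^{τ(A')}_{τ(A₁),τ(A₂)}, c^{τ(B')}_{τ(B₁),τ(B₂)}, c^{τ(C')}_{τ(C₁),τ(C₂)} > 0`
and `c^{τ(A)}_{τ(B₁),τ(C₂)}, c^{τ(B)}_{τ(C₁),τ(A₂)}, c^{τ(C)}_{τ(A₁),τ(B₂)} > 0`. -/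
def IsExtHornTuple (n : ℕ) (A A' B B' C C' : Finset ℕ) : Prop :=
  A ⊆ Finset.range n ∧ A' ⊆ Finset.range n ∧ B ⊆ Finset.range n ∧
    B' ⊆ Finset.range n ∧ C ⊆ Finset.range n ∧ C' ⊆ Finset.range n ∧
  Disjoint A A' ∧ Disjoint B B' ∧ Disjoint C C' ∧
  A.card = B'.card + C'.card ∧ B.card = A'.card + C'.card ∧
    C.card = A'.card + B'.card ∧
  ∃ A₁ A₂ B₁ B₂ C₁ C₂ : Finset ℕ,
    A₁ ⊆ Finset.range n ∧ A₂ ⊆ Finset.range n ∧ B₁ ⊆ Finset.range n ∧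
      B₂ ⊆ Finset.range n ∧ C₁ ⊆ Finset.range n ∧ C₂ ⊆ Finset.range n ∧
    A₁.card = A'.card ∧ A₂.card = A'.card ∧ B₁.card = B'.card ∧
      B₂.card = B'.card ∧ C₁.card = C'.card ∧ C₂.card = C'.card ∧
    0 < lrCoeff (tauPartition A') (tauPartition A₁) (tauPartition A₂) ∧
    0 < lrCoeff (tauPartition B') (tauPartition B₁) (tauPartition B₂) ∧
    0 < lrCoeff (tauPartition C') (tauPartition C₁) (tauPartition C₂) ∧
    0 < lrCoeff (tauPartition A) (tauPartition B₁) (tauPartition C₂) ∧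
    0 < lrCoeff (tauPartition B) (tauPartition C₁) (tauPartition A₂) ∧
    0 < lrCoeff (tauPartition C) (tauPartition A₁) (tauPartition B₂)

/-- `(μ, ν, lam)` satisfies every extended Horn inequality (with ambient set
`{0, …, n−1}`). -/
def SatisfiesExtHorn (n : ℕ) (μ ν lam : ℕ → ℕ) : Prop :=
  ∀ A A' B B' C C' : Finset ℕ, IsExtHornTuple n A A' B B' C C' →
    (0 : ℤ) ≤ (∑ i ∈ A, (μ i : ℤ)) - (∑ i ∈ A', (μ i : ℤ)) +
      (∑ j ∈ B, (ν j : ℤ)) - (∑ j ∈ B', (ν j : ℤ)) +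
      (∑ k ∈ C, (lam k : ℤ)) - (∑ k ∈ C', (lam k : ℤ))

/-- The single-row partition `(p)`. -/
def rowPartition (p : ℕ) : ℕ → ℕ := fun i => if i = 0 then p else 0

/-- The conjugate (transpose) partition: `conjugatePart μ i` is the number of
boxes in the (0-indexed) column `i` of `μ`, i.e. `#{j : μ j > i}`; in the
paper's 1-indexed notation this is `μ'_{i+1} = #{j : μ_j ≥ i + 1}`. -/
noncomputable def conjugatePart (μ : ℕ → ℕ) : ℕ → ℕ := fun i =>
  Set.ncard {j : ℕ | i < μ j}



/-!
Rows are indexed from `0`. The strip conditions are the extended Horn inequalities for the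
tuples `(∅, {i+1}, {i}, ∅, {1}, ∅)` and `({i}, ∅, ∅, {i+1}, {1}, ∅)`. For the column count, let
`P`, `Q` be the rows `i ≥ 1` with `μ i > ν i`, resp. `μ i < ν i`; the tuple
`({0} ∪ Q, P, {0} ∪ P, Q, {1, …, |P| + |Q|}, {0})` yields
`p + ∑_{i ≥ 1} |μ i - ν i| ≤ μ 0 + ν 0`. The positivity of every Littlewood–Richardson
coefficient required by condition (III) is witnessed by a filling of the skew shape that puts a
single letter in each row, using `τ(S + 1) = τ(S) + (1^|S|)` and `τ({0} ∪ (S + 1)) = τ(S)`.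

On the other hand, a column `c < max (μ 0) (ν 0)` either satisfies `μ'_c = ν'_c > 0` or contains the
cell `(min μ'_c ν'_c, c)` of the symmetric difference of the two diagrams, so
`max (μ 0) (ν 0) ≤ #{c | μ'_c = ν'_c > 0} + ∑ |μ i - ν i|`. As
`2 |μ ∧ ν| = |μ| + |ν| - ∑ |μ i - ν i|` and `2 max (μ 0) (ν 0) = μ 0 + ν 0 + |μ 0 - ν 0|`, the two
bounds give the claim.
-/

open Finset

def columnPartition (k : ℕ) : ℕ → ℕ := fun t => if t < k then 1 else 0

lemma isPartitionN_rowPartition (x : ℕ) : IsPartitionN 1 (rowPartition x) := by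
  refine ⟨fun i j hij => ?_, fun i hi => if_neg (by omega)⟩
  simp only [rowPartition]
  split_ifs <;> omega

lemma isPartitionN_columnPartition (k : ℕ) : IsPartitionN k (columnPartition k) := by
  refine ⟨fun i j hij => ?_, fun i hi => if_neg (by omega)⟩
  simp only [columnPartition]
  split_ifs <;> omega

lemma rowPartition_zero : rowPartition 0 = 0 := by
  funext i
  simp [rowPartition]

lemma rowPartition_add (a c : ℕ) : rowPartition (a + c) = rowPartition a + rowPartition c := by
  funext i
  simp only [rowPartition, Pi.add_apply]
  split_ifs <;> rfl

section Tau

lemma List.SortedLT.getElem_add_sub_le {L : List ℕ} (hL : L.SortedLT) {i : ℕ} :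
    ∀ {j : ℕ} (hij : i ≤ j) (hj : j < L.length), L[i] + (j - i) ≤ L[j]
  | 0, hij, _ => by simp [Nat.le_zero.1 hij]
  | j + 1, hij, hj => by
    rcases hij.eq_or_lt with rfl | hij
    · simp
    have := hL.getElem_lt_getElem_iff (i := j) (j := j + 1) (hi := by omega) (hj := hj)
    have := hL.getElem_add_sub_le (Nat.le_of_lt_succ hij) (by omega)
    omega

lemma tauPartition_of_card_le {I : Finset ℕ} {t : ℕ} (ht : I.card ≤ t) :
    tauPartition I t = 0 := by
  rw [tauPartition, if_neg (by omega)]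

lemma tauPartition_of_sort_eq {I : Finset ℕ} {L : List ℕ} (hL : I.sort (· ≤ ·) = L)
    {j : ℕ} (hj : j < L.length) : tauPartition I (L.length - 1 - j) = L[j] - j := by
  have hcard : I.card = L.length := by rw [← hL, Finset.length_sort]
  rw [tauPartition, if_pos (by omega), hL, hcard,
    show L.length - 1 - (L.length - 1 - j) = j by omega, List.getD_eq_getElem _ _ hj]

lemma tauPartition_antitone (I : Finset ℕ) : Antitone (tauPartition I) := by
  intro t t' htt'
  by_cases ht' : t' < I.card
  · obtain ⟨j', hj', rfl⟩ : ∃ j' < I.card, t' = I.card - 1 - j' :=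
      ⟨I.card - 1 - t', by omega, by omega⟩
    obtain ⟨j, hj, rfl⟩ : ∃ j < I.card, t = I.card - 1 - j :=
      ⟨I.card - 1 - t, by omega, by omega⟩
    have hlen : (I.sort (· ≤ ·)).length = I.card := length_sort _
    have h := tauPartition_of_sort_eq rfl (I := I) (j := j) (by omega)
    have h' := tauPartition_of_sort_eq rfl (I := I) (j := j') (by omega)
    have := (sortedLT_sort I).getElem_add_sub_le (i := j') (j := j) (by omega) (by omega)
    simp only [hlen] at h h'
    rw [h, h']
    omega
  · rw [tauPartition_of_card_le (by omega)]
    exact Nat.zero_le _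

lemma isPartitionN_tauPartition (I : Finset ℕ) : IsPartitionN I.card (tauPartition I) :=
  ⟨tauPartition_antitone I, fun _ => tauPartition_of_card_le⟩

lemma tauPartition_range (k : ℕ) : tauPartition (range k) = 0 := by
  funext t
  by_cases ht : t < k
  · obtain ⟨j, hj, rfl⟩ : ∃ j < k, t = k - 1 - j := ⟨k - 1 - t, by omega, by omega⟩
    have h := tauPartition_of_sort_eq (sort_range k) (j := j) (by simpa using hj)
    simp only [List.length_range, List.getElem_range, Nat.sub_self] at h
    rw [h, Pi.zero_apply]
  · exact tauPartition_of_card_le (by simpa using ht)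

lemma tauPartition_singleton (x : ℕ) : tauPartition {x} = rowPartition x := by
  funext t
  rcases Nat.eq_zero_or_pos t with rfl | ht
  · simpa [rowPartition] using tauPartition_of_sort_eq (sort_singleton _ x) (j := 0) (by simp)
  · rw [tauPartition_of_card_le (by simp; omega), rowPartition, if_neg (by omega)]

lemma tauPartition_empty : tauPartition ∅ = rowPartition 0 := by
  rw [← range_zero, tauPartition_range, rowPartition_zero]

lemma sort_map_succ (I : Finset ℕ) :
    (I.map (addRightEmbedding 1)).sort (· ≤ ·) = (I.sort (· ≤ ·)).map (· + 1) :=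
  (StrictMono.strictMonoOn (fun _ _ h => Nat.succ_lt_succ h) _).map_finsetSort.symm

lemma tauPartition_map_succ (I : Finset ℕ) :
    tauPartition (I.map (addRightEmbedding 1)) = tauPartition I + columnPartition I.card := by
  have hlen : (I.sort (· ≤ ·)).length = I.card := length_sort _
  funext t
  rw [Pi.add_apply, columnPartition]
  by_cases ht : t < I.card
  · obtain ⟨j, hj, rfl⟩ : ∃ j < I.card, t = I.card - 1 - j :=
      ⟨I.card - 1 - t, by omega, by omega⟩
    have h1 := tauPartition_of_sort_eq (sort_map_succ I) (j := j) (by simpa [hlen])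
    have h2 := tauPartition_of_sort_eq rfl (I := I) (j := j) (by omega)
    have := (sortedLT_sort I).getElem_add_sub_le (Nat.zero_le j) (by omega)
    simp only [List.length_map, hlen, List.getElem_map] at h1 h2
    rw [h1, h2, if_pos ht]
    omega
  · rw [tauPartition_of_card_le (by simpa using ht), tauPartition_of_card_le (by omega),
      if_neg ht]

lemma tauPartition_map_succ_range (k : ℕ) :
    tauPartition ((range k).map (addRightEmbedding 1)) = columnPartition k := by
  rw [tauPartition_map_succ, tauPartition_range, card_range, zero_add]

lemma tauPartition_insert_zero_map_succ (I : Finset ℕ) :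
    tauPartition (insert 0 (I.map (addRightEmbedding 1))) = tauPartition I := by
  have hsort : (insert 0 (I.map (addRightEmbedding 1))).sort (· ≤ ·) =
      0 :: (I.sort (· ≤ ·)).map (· + 1) := by
    rw [sort_insert _ (fun _ _ => Nat.zero_le _) (by simp), sort_map_succ]
  have hlen : (I.sort (· ≤ ·)).length = I.card := length_sort _
  have hcard : (insert 0 (I.map (addRightEmbedding 1))).card = I.card + 1 := by
    rw [← length_sort (· ≤ ·), hsort, List.length_cons, List.length_map, hlen]
  funext t
  by_cases ht : t < I.card
  · obtain ⟨j, hj, rfl⟩ : ∃ j < I.card, t = I.card - 1 - j :=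
      ⟨I.card - 1 - t, by omega, by omega⟩
    have h1 := tauPartition_of_sort_eq hsort (j := j + 1) (by simpa [hlen])
    have h2 := tauPartition_of_sort_eq rfl (I := I) (j := j) (by omega)
    simp only [List.length_cons, List.length_map, hlen, List.getElem_cons_succ,
      List.getElem_map, show I.card + 1 - 1 - (j + 1) = I.card - 1 - j by omega] at h1 h2
    rw [h1, h2]
    omega
  · rw [tauPartition_of_card_le (I := I) (by omega)]
    rcases Nat.lt_or_ge t (I.card + 1) with h | h
    · obtain rfl : t = I.card := by omega
      simpa [hlen] using tauPartition_of_sort_eq hsort (j := 0) (by simp)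
    · exact tauPartition_of_card_le (by omega)

end Tau

section LittlewoodRichardson

variable {lam mu nu : ℕ → ℕ}

lemma finite_skewCells {N : ℕ} (hlam : ∀ i, N ≤ i → lam i = 0) :
    (skewCells lam mu).Finite := by
  refine ((Set.finite_Iio N).prod (Set.finite_Iio ((range N).sup lam))).subset ?_
  rintro ⟨i, j⟩ ⟨-, hj⟩
  have hi : i < N := by
    by_contra hi
    rw [hlam i (by omega)] at hj
    omega
  exact ⟨hi, lt_of_lt_of_le hj (le_sup (f := lam) (mem_range.2 hi))⟩

lemma finite_setOf_isLRTableau {N M : ℕ} (hlam : ∀ i, N ≤ i → lam i = 0)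
    (hnu : ∀ t, M ≤ t → nu t = 0) :
    {T | IsLRTableau lam mu nu T ∧ ∀ p ∉ skewCells lam mu, T p = 0}.Finite := by
  have hcells := finite_skewCells (mu := mu) hlam
  have : Finite (skewCells lam mu) := hcells.to_subtype
  have hlt : ∀ T, IsLRTableau lam mu nu T → ∀ p ∈ skewCells lam mu, T p < M := by
    intro T hT p hp
    by_contra hM
    have hfiber := hT.2.2.2.1 (T p)
    rw [hnu _ (by omega), Set.ncard_eq_zero (hcells.subset fun _ hq => hq.1)] at hfiber
    exact hfiber.subset ⟨hp, rfl⟩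
  refine Set.Finite.of_finite_image (f := fun T (q : skewCells lam mu) => T q)
    ((Set.Finite.pi (t := fun _ => Set.Iio M) fun _ => Set.finite_Iio M).subset ?_) ?_
  · rintro _ ⟨T, hT, rfl⟩ q -
    exact hlt T hT.1 q q.2
  · intro T hT T' hT' hTT'
    funext p
    by_cases hp : p ∈ skewCells lam mu
    · exact congrFun hTT' ⟨p, hp⟩
    · rw [hT.2 p hp, hT'.2 p hp]

lemma lrCoeff_pos_of_isLRTableau {N M : ℕ} (hlam : ∀ i, N ≤ i → lam i = 0)
    (hnu : ∀ t, M ≤ t → nu t = 0) {T : ℕ × ℕ → ℕ} (hT : IsLRTableau lam mu nu T)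
    (hT0 : ∀ p ∉ skewCells lam mu, T p = 0) : 0 < lrCoeff lam mu nu :=
  (Set.ncard_pos (finite_setOf_isLRTableau hlam hnu)).2 ⟨T, hT, hT0⟩

def rowTableau (s : ℕ) (lam mu : ℕ → ℕ) : ℕ × ℕ → ℕ := fun p =>
  if mu p.1 ≤ p.2 ∧ p.2 < lam p.1 then p.1 - s else 0

lemma rowTableau_eq_iff {s : ℕ} (hrows : ∀ i < s, mu i = lam i) {p : ℕ × ℕ}
    (hp : p ∈ skewCells lam mu) (t : ℕ) : rowTableau s lam mu p = t ↔ p.1 = t + s := by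
  obtain ⟨h1, h2⟩ := hp
  have : s ≤ p.1 := by
    by_contra hi
    have := hrows p.1 (by omega)
    omega
  rw [rowTableau, if_pos ⟨h1, h2⟩]
  omega

lemma setOf_rowTableau_eq {s : ℕ} (hrows : ∀ i < s, mu i = lam i) (t : ℕ) :
    {p ∈ skewCells lam mu | rowTableau s lam mu p = t} =
      ↑({t + s} ×ˢ Ico (mu (t + s)) (lam (t + s))) := by
  ext ⟨i, j⟩
  simp only [Set.mem_sep_iff, coe_product, coe_singleton, coe_Ico, Set.mem_prod,
    Set.mem_singleton_iff, Set.mem_Ico]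
  constructor
  · rintro ⟨hp, hT⟩
    obtain rfl := (rowTableau_eq_iff hrows hp t).1 hT
    exact ⟨rfl, hp⟩
  · rintro ⟨rfl, hp⟩
    exact ⟨hp, (rowTableau_eq_iff hrows hp t).2 rfl⟩

lemma ncard_setOf_rowTableau_eq {s : ℕ} (hrows : ∀ i < s, mu i = lam i) (t : ℕ) :
    {p ∈ skewCells lam mu | rowTableau s lam mu p = t}.ncard =
      lam (t + s) - mu (t + s) := by
  rw [setOf_rowTableau_eq hrows, Set.ncard_coe_finset, card_product, card_singleton,
    Nat.card_Ico, one_mul]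

lemma isLRTableau_rowTableau {s : ℕ} (hrows : ∀ i < s, mu i = lam i) (hmu : ∀ i, mu i ≤ lam i)
    (hnu : ∀ t, nu t = lam (t + s) - mu (t + s)) (hanti : Antitone nu) :
    IsLRTableau lam mu nu (rowTableau s lam mu) := by
  refine ⟨hmu, ?_, ?_, fun t => by rw [ncard_setOf_rowTableau_eq hrows, hnu], ?_⟩
  · intro i j j' hj hjj' hj'
    have hp : (i, j) ∈ skewCells lam mu := ⟨hj, by simp only; omega⟩
    have hp' : (i, j') ∈ skewCells lam mu := ⟨by simp only; omega, hj'⟩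
    rw [(rowTableau_eq_iff hrows hp' _).2 ((rowTableau_eq_iff hrows hp _).1 rfl)]
  · intro i j hp hp'
    have h := (rowTableau_eq_iff hrows hp _).1 rfl
    have h' := (rowTableau_eq_iff hrows hp' _).1 rfl
    simp only at h h'
    omega
  · -- Letter `t` fills row `t + s`: either that whole row precedes the cut, or no `t + 1` does.
    intro i j t
    by_cases hti : t + s < i
    · calc _ ≤ {p ∈ skewCells lam mu | rowTableau s lam mu p = t + 1}.ncard :=
            Set.ncard_le_ncard (fun p hp => ⟨hp.1, hp.2.1⟩)
              (by rw [setOf_rowTableau_eq hrows]; exact finite_toSet _)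
        _ = nu (t + 1) := by rw [ncard_setOf_rowTableau_eq hrows, hnu]
        _ ≤ nu t := hanti (Nat.le_succ t)
        _ = {p ∈ skewCells lam mu | rowTableau s lam mu p = t}.ncard := by
            rw [ncard_setOf_rowTableau_eq hrows, hnu]
        _ = _ := by
            congr 1
            ext p
            simp only [Set.mem_sep_iff, and_congr_right_iff]
            intro hp
            rw [rowTableau_eq_iff hrows hp]
            omega
    · have : {p ∈ skewCells lam mu | rowTableau s lam mu p = t + 1 ∧
          (p.1 < i ∨ (p.1 = i ∧ j ≤ p.2))} = ∅ := by
        ext p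
        simp only [Set.mem_sep_iff, Set.mem_empty_iff_false, iff_false, not_and]
        intro hp hT
        rw [rowTableau_eq_iff hrows hp] at hT
        omega
      rw [this, Set.ncard_empty]
      exact Nat.zero_le _

lemma lrCoeff_pos_of_rows {s N : ℕ} (hlam : ∀ i, N ≤ i → lam i = 0)
    (hrows : ∀ i < s, mu i = lam i) (hmu : ∀ i, mu i ≤ lam i)
    (hnu : ∀ t, nu t = lam (t + s) - mu (t + s)) (hanti : Antitone nu) :
    0 < lrCoeff lam mu nu :=
  lrCoeff_pos_of_isLRTableau hlam (M := N)
    (fun t ht => by rw [hnu, hlam _ (by omega), Nat.zero_sub])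
    (isLRTableau_rowTableau hrows hmu hnu hanti) fun _ hp => if_neg hp

lemma lrCoeff_add_pos {N : ℕ} {f g : ℕ → ℕ} (hf : IsPartitionN N f) (hg : IsPartitionN N g) :
    0 < lrCoeff (f + g) f g :=
  lrCoeff_pos_of_rows (N := N) (s := 0) (fun i hi => by simp [hf.2 i hi, hg.2 i hi])
    (fun i hi => absurd hi (Nat.not_lt_zero i)) (fun i => Nat.le_add_right _ _)
    (fun t => by simp) hg.1

lemma lrCoeff_self_zero_pos {N : ℕ} {f : ℕ → ℕ} (hf : IsPartitionN N f) :
    0 < lrCoeff f f 0 := by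
  simpa using lrCoeff_add_pos hf (g := 0) ⟨antitone_const, fun _ _ => rfl⟩

lemma lrCoeff_zero_self_pos {N : ℕ} {f : ℕ → ℕ} (hf : IsPartitionN N f) :
    0 < lrCoeff f 0 f := by
  simpa using lrCoeff_add_pos (f := 0) ⟨antitone_const, fun _ _ => rfl⟩ hf

lemma lrCoeff_rowPartition_pos {a b c : ℕ} (h : a + c = b) :
    0 < lrCoeff (rowPartition b) (rowPartition a) (rowPartition c) := by
  rw [← h, rowPartition_add]
  exact lrCoeff_add_pos (isPartitionN_rowPartition a) (isPartitionN_rowPartition c)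

lemma lrCoeff_columnPartition_pos (m q : ℕ) :
    0 < lrCoeff (columnPartition (m + q)) (columnPartition m) (columnPartition q) := by
  refine lrCoeff_pos_of_rows (s := m) (isPartitionN_columnPartition _).2 (fun i hi => ?_)
    (fun i => ?_) (fun t => ?_) (isPartitionN_columnPartition q).1 <;>
  simp only [columnPartition] <;> split_ifs <;> omega

end LittlewoodRichardson

section Conjugate

variable {n : ℕ} {μ ν : ℕ → ℕ}

lemma IsPartitionN.lt_conjugatePart_iff (hμ : IsPartitionN n μ) {c j : ℕ} :
    j < conjugatePart μ c ↔ c < μ j := by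
  have hex : ∃ k, μ k ≤ c := ⟨n, by rw [hμ.2 n le_rfl]; exact Nat.zero_le c⟩
  have hset : {j | c < μ j} = Set.Iio (Nat.find hex) := by
    ext j
    rw [Set.mem_Iio]
    show c < μ j ↔ _
    constructor
    · intro hj
      by_contra hk
      exact (hμ.1 (not_lt.1 hk)).trans (Nat.find_spec hex) |>.not_gt hj
    · exact fun hj => not_le.1 (Nat.find_min hex hj)
  rw [conjugatePart, hset, Set.ncard_Iio_nat]
  exact (Set.ext_iff.1 hset j).symm

lemma IsPartitionN.conjugatePart_le (hμ : IsPartitionN n μ) (c : ℕ) : conjugatePart μ c ≤ n :=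
  not_lt.1 fun h => by simpa [hμ.2 n le_rfl] using hμ.lt_conjugatePart_iff.1 h

lemma apply_conjugatePart_le_and_lt (hμ : IsPartitionN n μ) (hν : IsPartitionN n ν) {c : ℕ}
    (h : conjugatePart μ c < conjugatePart ν c) :
    μ (conjugatePart μ c) ≤ c ∧ c < ν (conjugatePart μ c) :=
  ⟨not_lt.1 fun hc => (hμ.lt_conjugatePart_iff.2 hc).false, hν.lt_conjugatePart_iff.1 h⟩

def symmDiffCells (n : ℕ) (μ ν : ℕ → ℕ) : Finset (ℕ × ℕ) :=
  (range n).biUnion fun i => {i} ×ˢ Ico (min (μ i) (ν i)) (max (μ i) (ν i))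

lemma card_symmDiffCells :
    ((symmDiffCells n μ ν).card : ℤ) = ∑ i ∈ range n, |(μ i : ℤ) - ν i| := by
  rw [symmDiffCells, card_biUnion]
  · push_cast
    refine sum_congr rfl fun i _ => ?_
    rw [card_product, card_singleton, Nat.card_Ico, one_mul, Nat.cast_sub min_le_max,
      Nat.cast_max, Nat.cast_min, max_sub_min_eq_abs']
  · intro a _ b _ hab
    simp only [Function.onFun, disjoint_left, mem_product, mem_singleton]
    rintro _ ⟨rfl, -⟩ ⟨rfl, -⟩
    exact hab rfl

lemma mem_symmDiffCells_of_conjugatePart_ne (hμ : IsPartitionN n μ) (hν : IsPartitionN n ν)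
    {c : ℕ} (hc : conjugatePart μ c ≠ conjugatePart ν c) :
    (min (conjugatePart μ c) (conjugatePart ν c), c) ∈ symmDiffCells n μ ν := by
  simp only [symmDiffCells, mem_biUnion, mem_range, mem_product, mem_singleton, mem_Ico]
  refine ⟨_, ?_, rfl, ?_⟩
  · have := hμ.conjugatePart_le c
    have := hν.conjugatePart_le c
    omega
  · rcases lt_or_gt_of_ne hc with h | h
    · have := apply_conjugatePart_le_and_lt hμ hν h
      rw [min_eq_left h.le]
      omega
    · have := apply_conjugatePart_le_and_lt hν hμ h
      rw [min_eq_right h.le]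
      omega

lemma max_le_ncard_add_sum_abs (hμ : IsPartitionN n μ) (hν : IsPartitionN n ν) :
    (max (μ 0) (ν 0) : ℤ) ≤
      {c | conjugatePart μ c = conjugatePart ν c ∧ 0 < conjugatePart μ c}.ncard +
        ∑ i ∈ range n, |(μ i : ℤ) - ν i| := by
  set M := max (μ 0) (ν 0)
  have hE : {c | conjugatePart μ c = conjugatePart ν c ∧ 0 < conjugatePart μ c} =
      ↑((range M).filter fun c => conjugatePart μ c = conjugatePart ν c) := by
    ext c
    simp only [coe_filter, mem_range, Set.mem_ofPred_eq]
    constructor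
    · rintro ⟨h, h0⟩
      exact ⟨lt_max_of_lt_left (hμ.lt_conjugatePart_iff.1 h0), h⟩
    · rintro ⟨hc, h⟩
      refine ⟨h, ?_⟩
      rcases lt_max_iff.1 hc with h0 | h0
      · exact hμ.lt_conjugatePart_iff.2 h0
      · rw [h]
        exact hν.lt_conjugatePart_iff.2 h0
  have hU : ((range M).filter fun c => ¬conjugatePart μ c = conjugatePart ν c).card ≤
      (symmDiffCells n μ ν).card :=
    card_le_card_of_injOn (fun c => (min (conjugatePart μ c) (conjugatePart ν c), c))
      (fun c hc => mem_symmDiffCells_of_conjugatePart_ne hμ hν (mem_filter.1 hc).2)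
      (fun _ _ _ _ h => (Prod.ext_iff.1 h).2)
  have hsplit := card_filter_add_card_filter_not (s := range M)
    (fun c => conjugatePart μ c = conjugatePart ν c)
  rw [card_range] at hsplit
  rw [hE, Set.ncard_coe_finset, ← card_symmDiffCells]
  omega

end Conjugate

lemma Finset.sum_abs_sub_eq {ι α : Type*} [AddCommGroup α] [LinearOrder α]
    [IsOrderedAddMonoid α] (s : Finset ι) (a b : ι → α) :
    ∑ i ∈ s, |a i - b i| =
      ∑ i ∈ s with b i < a i, (a i - b i) + ∑ i ∈ s with a i < b i, (b i - a i) := by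
  rw [sum_filter, sum_filter, ← sum_add_distrib]
  refine sum_congr rfl fun i _ => ?_
  rcases lt_trichotomy (a i) (b i) with h | h | h
  · rw [if_neg h.not_gt, if_pos h, abs_of_neg (sub_neg.2 h), neg_sub, zero_add]
  · simp [h]
  · rw [if_pos h, if_neg h.not_gt, abs_of_pos (sub_pos.2 h), add_zero]

lemma Finset.two_mul_sum_min_eq {ι : Type*} (s : Finset ι) (a b : ι → ℤ) :
    2 * ∑ i ∈ s, min (a i) (b i) = ∑ i ∈ s, a i + ∑ i ∈ s, b i - ∑ i ∈ s, |a i - b i| := by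
  rw [mul_sum, ← sum_add_distrib, ← sum_sub_distrib]
  exact sum_congr rfl fun i _ => by
    linarith [min_add_max (a i) (b i), max_sub_min_eq_abs' (a i) (b i)]

section ExtHorn

variable {n : ℕ} {μ ν lam : ℕ → ℕ}

lemma isExtHornTuple_strip_left {i : ℕ} (hi : i + 1 < n) :
    IsExtHornTuple n ∅ {i + 1} {i} ∅ {1} ∅ := by
  refine ⟨by simp, by simpa, by simp; omega, by simp, by simp; omega, by simp, by simp, by simp,
    by simp, rfl, rfl, rfl, {1}, {i}, ∅, ∅, ∅, ∅, by simp; omega, by simp; omega, by simp,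
    by simp, by simp, by simp, rfl, rfl, rfl, rfl, rfl, rfl, ?_, ?_, ?_, ?_, ?_, ?_⟩ <;>
  simp only [tauPartition_singleton, tauPartition_empty] <;>
  exact lrCoeff_rowPartition_pos (by omega)

lemma isExtHornTuple_strip_right {i : ℕ} (hi : i + 1 < n) :
    IsExtHornTuple n {i} ∅ ∅ {i + 1} {1} ∅ := by
  refine ⟨by simp; omega, by simp, by simp, by simpa, by simp; omega, by simp, by simp, by simp,
    by simp, rfl, rfl, rfl, ∅, ∅, {i}, {1}, ∅, ∅, by simp, by simp, by simp; omega,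
    by simp; omega, by simp, by simp, rfl, rfl, rfl, rfl, rfl, rfl, ?_, ?_, ?_, ?_, ?_, ?_⟩ <;>
  simp only [tauPartition_singleton, tauPartition_empty] <;>
  exact lrCoeff_rowPartition_pos (by omega)

lemma SatisfiesExtHorn.apply_succ_le_left (h : SatisfiesExtHorn n μ ν lam) {i : ℕ}
    (hi : i + 1 < n) : μ (i + 1) ≤ ν i + lam 1 := by
  have := h _ _ _ _ _ _ (isExtHornTuple_strip_left hi)
  simp only [sum_empty, sum_singleton] at this
  omega

lemma SatisfiesExtHorn.apply_succ_le_right (h : SatisfiesExtHorn n μ ν lam) {i : ℕ}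
    (hi : i + 1 < n) : ν (i + 1) ≤ μ i + lam 1 := by
  have := h _ _ _ _ _ _ (isExtHornTuple_strip_right hi)
  simp only [sum_empty, sum_singleton] at this
  omega

lemma map_succ_subset_range {X : Finset ℕ} (h : X ⊆ range n) :
    X.map (addRightEmbedding 1) ⊆ range (n + 1) := by
  intro x hx
  obtain ⟨y, hy, rfl⟩ := mem_map.1 hx
  simpa using mem_range.1 (h hy)

lemma card_add_card_le {P Q : Finset ℕ} (hP : P ⊆ range n) (hQ : Q ⊆ range n)
    (hPQ : Disjoint P Q) : P.card + Q.card ≤ n := by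
  simpa [card_union_of_disjoint hPQ] using card_le_card (union_subset hP hQ)

lemma isExtHornTuple_of_disjoint {P Q : Finset ℕ} (hP : P ⊆ range n) (hQ : Q ⊆ range n)
    (hPQ : Disjoint P Q) :
    IsExtHornTuple (n + 1) (insert 0 (Q.map (addRightEmbedding 1))) (P.map (addRightEmbedding 1))
      (insert 0 (P.map (addRightEmbedding 1))) (Q.map (addRightEmbedding 1))
      ((range (P.card + Q.card)).map (addRightEmbedding 1)) {0} := by
  have hcard := card_add_card_le hP hQ hPQ
  have h0 : ∀ X : Finset ℕ, 0 ∉ X.map (addRightEmbedding 1) := by simp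
  have hsub : ∀ X : Finset ℕ, X ⊆ range n → X ⊆ range (n + 1) :=
    fun X hX => hX.trans (range_subset_range.2 n.le_succ)
  refine ⟨insert_subset (by simp) (map_succ_subset_range hQ), map_succ_subset_range hP,
    insert_subset (by simp) (map_succ_subset_range hP), map_succ_subset_range hQ,
    map_succ_subset_range (range_subset_range.2 hcard), by simp,
    disjoint_insert_left.2 ⟨h0 P, (disjoint_map _).2 hPQ.symm⟩,
    disjoint_insert_left.2 ⟨h0 Q, (disjoint_map _).2 hPQ⟩, by simp,
    by simp [card_insert_of_notMem (h0 _)], by simp [card_insert_of_notMem (h0 _)], by simp,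
    (range P.card).map (addRightEmbedding 1), P, Q, (range Q.card).map (addRightEmbedding 1),
    {0}, {0}, map_succ_subset_range (range_subset_range.2 (by omega)), hsub P hP, hsub Q hQ,
    map_succ_subset_range (range_subset_range.2 (by omega)), by simp, by simp,
    by simp, by simp, by simp, by simp, rfl, rfl, ?_, ?_, ?_, ?_, ?_, ?_⟩
  · rw [tauPartition_map_succ, tauPartition_map_succ_range, add_comm]
    exact lrCoeff_add_pos (isPartitionN_columnPartition _) (isPartitionN_tauPartition P)
  · rw [tauPartition_map_succ, tauPartition_map_succ_range]
    exact lrCoeff_add_pos (isPartitionN_tauPartition Q) (isPartitionN_columnPartition _)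
  · rw [tauPartition_singleton]
    exact lrCoeff_rowPartition_pos rfl
  · rw [tauPartition_insert_zero_map_succ, tauPartition_singleton, rowPartition_zero]
    exact lrCoeff_self_zero_pos (isPartitionN_tauPartition Q)
  · rw [tauPartition_insert_zero_map_succ, tauPartition_singleton, rowPartition_zero]
    exact lrCoeff_zero_self_pos (isPartitionN_tauPartition P)
  · rw [tauPartition_map_succ_range, tauPartition_map_succ_range, tauPartition_map_succ_range]
    exact lrCoeff_columnPartition_pos _ _

lemma SatisfiesExtHorn.apply_zero_add_sum_abs_le (h : SatisfiesExtHorn (n + 1) μ ν lam) :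
    (lam 0 : ℤ) + ∑ i ∈ range n, |(μ (i + 1) : ℤ) - ν (i + 1)| ≤
      μ 0 + ν 0 + ∑ i ∈ range n, (lam (i + 1) : ℤ) := by
  set P := (range n).filter fun i => (ν (i + 1) : ℤ) < μ (i + 1)
  set Q := (range n).filter fun i => (μ (i + 1) : ℤ) < ν (i + 1)
  have hPQ : Disjoint P Q := disjoint_filter.2 fun i _ h h' => lt_asymm h h'
  have hHorn := h _ _ _ _ _ _
    (isExtHornTuple_of_disjoint (filter_subset _ _) (filter_subset _ _) hPQ)
  have hC : ∑ k ∈ (range (P.card + Q.card)).map (addRightEmbedding 1), (lam k : ℤ) ≤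
      ∑ i ∈ range n, (lam (i + 1) : ℤ) := by
    rw [sum_map]
    exact sum_le_sum_of_subset_of_nonneg
      (range_subset_range.2 (card_add_card_le (filter_subset _ _) (filter_subset _ _) hPQ))
      fun _ _ _ => Nat.cast_nonneg _
  rw [sum_insert (by simp), sum_insert (by simp), sum_map, sum_map, sum_map, sum_map,
    sum_singleton] at hHorn
  rw [sum_abs_sub_eq, sum_sub_distrib, sum_sub_distrib]
  simp only [addRightEmbedding_apply] at hHorn
  linarith

end ExtHorn

theorem row_case_horizontal_strips_general (n p : ℕ) (μ ν : ℕ → ℕ)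
    (hμ : IsPartitionN n μ) (hν : IsPartitionN n ν)
    (hrow : IsPartitionN n (rowPartition p))
    (hEH : SatisfiesExtHorn n μ ν (rowPartition p)) :
    (∀ i, μ (i + 1) ≤ min (μ i) (ν i)) ∧
    (∀ i, ν (i + 1) ≤ min (μ i) (ν i)) ∧
    (∑ i ∈ Finset.range n, (min (μ i) (ν i) : ℤ)) -
        ((∑ i ∈ Finset.range n, (μ i : ℤ)) +
          (∑ i ∈ Finset.range n, (ν i : ℤ)) - (p : ℤ)) / 2 ≤
      (Set.ncard {i : ℕ |
        conjugatePart μ i = conjugatePart ν i ∧ 0 < conjugatePart μ i} : ℤ) := by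
  refine ⟨fun i => ?_, fun i => ?_, ?_⟩
  · rcases lt_or_ge (i + 1) n with hi | hi
    · exact le_min (hμ.1 i.le_succ) (by simpa [rowPartition] using hEH.apply_succ_le_left hi)
    · simp [hμ.2 _ hi]
  · rcases lt_or_ge (i + 1) n with hi | hi
    · exact le_min (by simpa [rowPartition] using hEH.apply_succ_le_right hi) (hν.1 i.le_succ)
    · simp [hν.2 _ hi]
  have hcount := max_le_ncard_add_sum_abs hμ hν
  have hmin := two_mul_sum_min_eq (range n) (fun i => (μ i : ℤ)) (fun i => (ν i : ℤ))
  obtain _ | n := n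
  · obtain rfl : p = 0 := by simpa [rowPartition] using hrow.2 0 le_rfl
    simp
  have hHorn := hEH.apply_zero_add_sum_abs_le
  simp only [rowPartition, if_true, Nat.add_one_ne_zero, if_false, Nat.cast_zero,
    sum_const_zero] at hHorn
  have hsplit := sum_range_succ' (fun i => |(μ i : ℤ) - ν i|) n
  have := max_sub_min_eq_abs' (μ 0 : ℤ) (ν 0)
  have := min_add_max (μ 0 : ℤ) (ν 0)
  omega

/-- Section 3, row case: if `μ, ν ∈ Par_n`, `(p) ∈ Par_n`, `|μ| + |ν| + p` is
even and `(μ, ν, (p))` satisfies every extended Horn inequality, then with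
`k = (|μ| + |ν| − p)/2`: the skew shapes `μ/(μ∧ν)` and `ν/(μ∧ν)` are
horizontal strips, and there are at least `|μ∧ν| − k` columns `i` with
`μ'_i = ν'_i > 0`. -/
theorem row_case_horizontal_strips (n p : ℕ) (μ ν : ℕ → ℕ)
    (hμ : IsPartitionN n μ) (hν : IsPartitionN n ν)
    (hrow : IsPartitionN n (rowPartition p))
    (hparity : Even ((∑ i ∈ Finset.range n, μ i) +
      (∑ i ∈ Finset.range n, ν i) + p))
    (hEH : SatisfiesExtHorn n μ ν (rowPartition p)) :
    (∀ i, μ (i + 1) ≤ min (μ i) (ν i)) ∧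
    (∀ i, ν (i + 1) ≤ min (μ i) (ν i)) ∧
    (∑ i ∈ Finset.range n, (min (μ i) (ν i) : ℤ)) -
        ((∑ i ∈ Finset.range n, (μ i : ℤ)) +
          (∑ i ∈ Finset.range n, (ν i : ℤ)) - (p : ℤ)) / 2 ≤
      (Set.ncard {i : ℕ |
        conjugatePart μ i = conjugatePart ν i ∧ 0 < conjugatePart μ i} : ℤ) :=
  row_case_horizontal_strips_general n p μ ν hμ hν hrow hEH
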